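/- Soundness of LIK X: let X ⊆ {D,T,4}. Every LIK X-derivable formula is forced at every world of every model based on a forward and downward confluent frame whose relation R is in addition serial if D ∈ X, reflexive if T ∈ X, and transitive if 4 ∈ X. -/
import Mathlib


/-- Formulas of intuitionistic modal logic. -/
inductive Formula : Type where
  | atom : ℕ → Formula
  | top  : Formula
  | bot  : Formula
  | and  : Formula → Formula → Formula
  | or   : Formula → Formula → Formula
  | imp  : Formula → Formula → Formula
  | box  : Formula → Formula
  | dia  : Formula → Formula
deriving DecidableEq

/-- A model: a frame `(W, ≤, R)` together with a monotone valuation. -/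
structure Model (W : Type) where
  le : W → W → Prop
  rel : W → W → Prop
  val : ℕ → W → Prop
  le_refl : ∀ x, le x x
  le_trans : ∀ x y z, le x y → le y z → le x z
  val_mono : ∀ p x y, le x y → val p x → val p y

/-- Forward confluence: `x ≤ x'` and `R x y` yield `y'` with `R x' y'` and `y ≤ y'`. -/
def ForwardConfluent {W : Type} (M : Model W) : Prop :=
  ∀ x x' y, M.le x x' → M.rel x y → ∃ y', M.rel x' y' ∧ M.le y y'

/-- Downward confluence: `x ≤ x'` and `R x' y'` yield `y` with `R x y` and `y ≤ y'`. -/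
def DownwardConfluent {W : Type} (M : Model W) : Prop :=
  ∀ x x' y', M.le x x' → M.rel x' y' → ∃ y, M.rel x y ∧ M.le y y'

/-- The local forcing relation. -/
def Force {W : Type} (M : Model W) : W → Formula → Prop
  | x, .atom p => M.val p x
  | _, .top => True
  | _, .bot => False
  | x, .and A B => Force M x A ∧ Force M x B
  | x, .or A B => Force M x A ∨ Force M x B
  | x, .imp A B => ∀ y, M.le x y → Force M y A → Force M y B
  | x, .box A => ∀ y, M.rel x y → Force M y A
  | x, .dia A => ∃ y, M.rel x y ∧ Force M y A

/-- The three optional extension axioms D, T, 4. -/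
inductive ModAx : Type where
  | D : ModAx
  | T : ModAx
  | Four : ModAx
deriving DecidableEq

/-- The Hilbert system LIK X: a complete Hilbert base for intuitionistic
propositional logic (as axiom schemata, hence all substitution instances of
IPL theorems are derivable), the modal axioms K□, K◇, N, DP, RV, the
extension axioms D, T, 4 according to membership in `X`, with rules
modus ponens and necessitation. -/
inductive LIK (X : Set ModAx) : Formula → Prop where
  | a1 (A B : Formula) : LIK X (A.imp (B.imp A))
  | a2 (A B C : Formula) : LIK X ((A.imp (B.imp C)).imp ((A.imp B).imp (A.imp C)))
  | a3 (A B : Formula) : LIK X ((A.and B).imp A)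
  | a4 (A B : Formula) : LIK X ((A.and B).imp B)
  | a5 (A B : Formula) : LIK X (A.imp (B.imp (A.and B)))
  | a6 (A B : Formula) : LIK X (A.imp (A.or B))
  | a7 (A B : Formula) : LIK X (B.imp (A.or B))
  | a8 (A B C : Formula) : LIK X ((A.imp C).imp ((B.imp C).imp ((A.or B).imp C)))
  | exfalso (A : Formula) : LIK X (Formula.bot.imp A)
  | truth : LIK X Formula.top
  | kbox (A B : Formula) :
      LIK X ((Formula.box (A.imp B)).imp ((Formula.box A).imp (Formula.box B)))
  | kdia (A B : Formula) :
      LIK X ((Formula.box (A.imp B)).imp ((Formula.dia A).imp (Formula.dia B)))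
  | nax : LIK X ((Formula.dia Formula.bot).imp Formula.bot)
  | dp (A B : Formula) :
      LIK X ((Formula.dia (A.or B)).imp ((Formula.dia A).or (Formula.dia B)))
  | rv (A B : Formula) :
      LIK X ((Formula.box (A.or B)).imp ((Formula.dia A).or (Formula.box B)))
  | dax : ModAx.D ∈ X → LIK X (Formula.dia Formula.top)
  | tax (A : Formula) : ModAx.T ∈ X →
      LIK X (((Formula.box A).imp A).and (A.imp (Formula.dia A)))
  | fourax (A : Formula) : ModAx.Four ∈ X →
      LIK X (((Formula.box A).imp (Formula.box (Formula.box A))).and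
        ((Formula.dia (Formula.dia A)).imp (Formula.dia A)))
  | mp (A B : Formula) : LIK X (A.imp B) → LIK X A → LIK X B
  | nec (A : Formula) : LIK X A → LIK X (Formula.box A)

theorem force_mono {W : Type} (M : Model W) (hF : ForwardConfluent M)
    (hD : DownwardConfluent M) (A : Formula) :
    ∀ x y, M.le x y → Force M x A → Force M y A := by
  induction A with
  | atom p => exact fun x y h hx => M.val_mono p x y h hx
  | top => intro _ _ _ _; trivial
  | bot => intro _ _ _ h; exact h
  | and A B ihA ihB => exact fun x y h ⟨ha, hb⟩ => ⟨ihA x y h ha, ihB x y h hb⟩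
  | or A B ihA ihB =>
    rintro x y h (ha | hb)
    · exact Or.inl (ihA x y h ha)
    · exact Or.inr (ihB x y h hb)
  | imp A B ihA ihB =>
    intro x y h hx z hz ha
    exact hx z (M.le_trans x y z h hz) ha
  | box A ihA =>
    intro x y h hx z hz
    obtain ⟨w, hw, hle⟩ := hD x y z h hz
    exact ihA w z hle (hx w hw)
  | dia A ihA =>
    rintro x y h ⟨z, hz, hforce⟩
    obtain ⟨w, hw, hle⟩ := hF x y z h hz
    exact ⟨w, hw, ihA z w hle hforce⟩

/-- Soundness of LIK X: every LIK X-derivable formula is forced at every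
world of every model based on a forward and downward confluent frame whose
accessibility relation is moreover serial if D ∈ X, reflexive if T ∈ X and
transitive if 4 ∈ X. -/
theorem likx_soundness (X : Set ModAx) (A : Formula) (h : LIK X A) :
    ∀ (W : Type) (M : Model W), Nonempty W →
      ForwardConfluent M → DownwardConfluent M →
      (ModAx.D ∈ X → ∀ x, ∃ y, M.rel x y) →
      (ModAx.T ∈ X → ∀ x, M.rel x x) →
      (ModAx.Four ∈ X → ∀ x y z, M.rel x y → M.rel y z → M.rel x z) →
      ∀ x : W, Force M x A := by
  intro W M _ hF hD hser hrefl htrans x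
  induction h generalizing x with
  | a1 A B => intro y _ ha z hz _; exact force_mono M hF hD A y z hz ha
  | a2 A B C =>
    intro y _ h1 z hz h2 w hw ha
    exact h1 w (M.le_trans _ _ _ hz hw) ha w (M.le_refl w)
      (h2 w hw ha)
  | a3 A B => intro y _ h; exact h.1
  | a4 A B => intro y _ h; exact h.2
  | a5 A B =>
    intro y _ ha z hz hb
    exact ⟨force_mono M hF hD A y z hz ha, hb⟩
  | a6 A B => intro y _ h; exact Or.inl h
  | a7 A B => intro y _ h; exact Or.inr h
  | a8 A B C =>
    intro y _ h1 z hz h2 w hw hab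
    cases hab with
    | inl ha => exact h1 w (M.le_trans _ _ _ hz hw) ha
    | inr hb => exact h2 w hw hb
  | exfalso A => intro y _ h; exact h.elim
  | truth => trivial
  | kbox A B =>
    intro y _ h1 z hz h2 w hw
    obtain ⟨v, hv, hle⟩ := hD y z w hz hw
    exact h1 v hv w hle (h2 w hw)
  | kdia A B =>
    intro y _ h1 z hz h2
    obtain ⟨w, hw, ha⟩ := h2
    obtain ⟨v, hv, hle⟩ := hD y z w hz hw
    exact ⟨w, hw, h1 v hv w hle ha⟩
  | nax => rintro y _ ⟨z, _, h⟩; exact h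
  | dp A B =>
    rintro y _ ⟨z, hz, (ha | hb)⟩
    · exact Or.inl ⟨z, hz, ha⟩
    · exact Or.inr ⟨z, hz, hb⟩
  | rv A B =>
    intro y _ h
    by_cases hc : ∃ z, M.rel y z ∧ Force M z A
    · exact Or.inl hc
    · refine Or.inr fun z hz => ?_
      cases h z hz with
      | inl ha => exact absurd ⟨z, hz, ha⟩ hc
      | inr hb => exact hb
  | dax hd =>
    obtain ⟨y, hy⟩ := hser hd x
    exact ⟨y, hy, trivial⟩
  | tax A ht =>
    refine ⟨fun y _ h => h y (hrefl ht y), fun y _ h => ⟨y, hrefl ht y, h⟩⟩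
  | fourax A h4 =>
    refine ⟨fun y _ h z hz w hw => h w (htrans h4 y z w hz hw), ?_⟩
    rintro y _ ⟨z, hz, w, hw, ha⟩
    exact ⟨w, htrans h4 y z w hz hw, ha⟩
  | mp A B hab ha ihab iha =>
    exact ihab x x (M.le_refl x) (iha x)
  | nec A ha iha => intro y _; exact iha y
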